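/- For n = 2k, the datum a = (2,2,...,2) (k twos) and b = (1,2,2,...,2) (a one followed by k−1 twos) is a Frobenius seaweed datum for sp_{2n} with exactly one central arc: the type-C meander graph Γ^C_n(a|b) is a single σ-stable segment (a path through all 2n vertices) with no cycles. -/

import Mathlib

/-- The arc of a block starting at offset `o` of size `m`: the `k`-th nested arc
joins vertices `o+k` and `o+(m-1-k)` (0-based), for `2k+1 < m`. -/
def inBlockArc (o m i j : ℕ) : Prop :=
  ∃ k : ℕ, 2 * k + 1 < m ∧ i = o + k ∧ j = o + (m - 1 - k)

/-- Arcs determined by a composition, drawn block by block starting at offset `o`. -/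
def arcs : List ℕ → ℕ → ℕ → ℕ → Prop
  | [], _, _, _ => False
  | m :: rest, o, i, j => inBlockArc o m i j ∨ arcs rest (o + m) i j

/-- The type-A meander graph of the pair of compositions `(a | b)` on `n` vertices
(0-based): arcs of `a` above the line, arcs of `b` below. -/
def meanderA (n : ℕ) (a b : List ℕ) : SimpleGraph (Fin n) where
  Adj i j := i ≠ j ∧ (arcs a 0 i.val j.val ∨ arcs a 0 j.val i.val ∨
      arcs b 0 i.val j.val ∨ arcs b 0 j.val i.val)
  symm := by
    constructor
    intro i j h
    exact ⟨Ne.symm h.1, by tauto⟩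
  loopless := by
    constructor
    intro i h
    exact h.1 rfl

/-- The symmetric composition `(a₁,…,a_s, 2d, a_s,…,a₁)` of `2n`, where
`d = n - Σ aᵢ` (a zero middle part is omitted). -/
def tildeComp (n : ℕ) (a : List ℕ) : List ℕ :=
  (a ++ [2 * (n - a.sum)] ++ a.reverse).filter (fun x => x != 0)

/-- The type-C meander graph `Γ^C_n(a|b)` on `2n` vertices. -/
def meanderC (n : ℕ) (a b : List ℕ) : SimpleGraph (Fin (2 * n)) :=
  meanderA (2 * n) (tildeComp n a) (tildeComp n b)

/-- The reflection `σ` sending vertex `i` to `2n + 1 - i` (0-based: `i ↦ 2n - 1 - i`). -/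
def sigmaRefl (n : ℕ) : Fin (2 * n) → Fin (2 * n) :=
  fun i => ⟨2 * n - 1 - i.val, by have := i.isLt; omega⟩

/-- A connected component is a cycle if every vertex in it has degree 2. -/
def IsCycleComp {V : Type*} (G : SimpleGraph V) (c : G.ConnectedComponent) : Prop :=
  ∀ v, G.connectedComponentMk v = c → (G.neighborSet v).ncard = 2

/-- A connected component is a segment if it is not a cycle. -/
def IsSegmentComp {V : Type*} (G : SimpleGraph V) (c : G.ConnectedComponent) : Prop :=
  ¬ IsCycleComp G c

/-- The number of cycles of a graph. -/
noncomputable def numCycles {V : Type*} (G : SimpleGraph V) : ℕ :=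
  {c : G.ConnectedComponent | IsCycleComp G c}.ncard

/-- The number of segments of a graph. -/
noncomputable def numSegments {V : Type*} (G : SimpleGraph V) : ℕ :=
  {c : G.ConnectedComponent | IsSegmentComp G c}.ncard

/-- A component of a type-C meander graph is `σ`-stable if `σ` maps it to itself. -/
def SigmaStable (n : ℕ) (G : SimpleGraph (Fin (2 * n))) (c : G.ConnectedComponent) : Prop :=
  ∀ v, G.connectedComponentMk v = c → G.connectedComponentMk (sigmaRefl n v) = c

/-- The number of non-`σ`-stable segments of `Γ^C_n(a|b)`. -/
noncomputable def numNonStableSegments (n : ℕ) (a b : List ℕ) : ℕ :=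
  {c : (meanderC n a b).ConnectedComponent |
    IsSegmentComp (meanderC n a b) c ∧ ¬ SigmaStable n (meanderC n a b) c}.ncard

/-- The topological index `T_n(a|b)` of `Γ^C_n(a|b)`:
(number of cycles) + ½·(number of non-`σ`-stable segments). -/
noncomputable def topIndex (n : ℕ) (a b : List ℕ) : ℚ :=
  (numCycles (meanderC n a b) : ℚ) + (numNonStableSegments n a b : ℚ) / 2

/-- A composition: all parts are positive. -/
def IsComposition (a : List ℕ) : Prop := ∀ x ∈ a, 0 < x

/-!
Since `Σ a = n` and `Σ b = n - 1`, the doubled compositions are `ã = (2^{2k})` and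
`b̃ = (1, 2^{2k-1}, 1)`. The upper arcs are then `{2t, 2t+1}` and the lower arcs `{2t+1, 2t+2}`,
so `Γ^C_n(a|b)` is the path `0 - 1 - ⋯ - (4k-1)`. A connected graph has a single component,
which is automatically `σ`-stable, and it is not a cycle because the endpoint `0` has degree one.
-/

open SimpleGraph

lemma arcs_append (l₁ l₂ : List ℕ) (o i j : ℕ) :
    arcs (l₁ ++ l₂) o i j ↔ arcs l₁ o i j ∨ arcs l₂ (o + l₁.sum) i j := by
  induction l₁ generalizing o with
  | nil => simp [arcs]
  | cons m l ih => simp only [List.cons_append, arcs, ih, List.sum_cons, add_assoc, or_assoc]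

lemma inBlockArc_two_iff (o i j : ℕ) : inBlockArc o 2 i j ↔ i = o ∧ j = o + 1 := by
  constructor
  · rintro ⟨k, hk, rfl, rfl⟩
    omega
  · rintro ⟨rfl, rfl⟩
    exact ⟨0, by omega, rfl, rfl⟩

lemma not_inBlockArc_one (o i j : ℕ) : ¬ inBlockArc o 1 i j := by
  rintro ⟨k, hk, -⟩
  omega

lemma arcs_one_cons (l : List ℕ) (o i j : ℕ) : arcs (1 :: l) o i j ↔ arcs l (o + 1) i j := by
  simp [arcs, not_inBlockArc_one]

lemma not_arcs_nil (o i j : ℕ) : ¬ arcs [] o i j := id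

lemma arcs_replicate_two (m o i j : ℕ) :
    arcs (List.replicate m 2) o i j ↔ ∃ t < m, i = o + 2 * t ∧ j = o + 2 * t + 1 := by
  induction m generalizing o with
  | zero => simp [arcs]
  | succ m ih =>
    simp only [List.replicate_succ, arcs, inBlockArc_two_iff, ih]
    constructor
    · rintro (⟨rfl, rfl⟩ | ⟨t, ht, rfl, rfl⟩)
      · exact ⟨0, by omega, by omega, by omega⟩
      · exact ⟨t + 1, by omega, by omega, by omega⟩
    · rintro ⟨_ | t, ht, rfl, rfl⟩
      · left; omega
      · right; exact ⟨t, by omega, by omega, by omega⟩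

lemma IsComposition.filter_ne_zero {a : List ℕ} (ha : IsComposition a) :
    a.filter (fun x => x != 0) = a :=
  List.filter_eq_self.mpr fun x hx => by simpa using (ha x hx).ne'

lemma isComposition_replicate_two (m : ℕ) : IsComposition (List.replicate m 2) := by
  intro x hx
  rw [List.eq_of_mem_replicate hx]
  norm_num

lemma tildeComp_of_sum_eq {n : ℕ} {a : List ℕ} (ha : IsComposition a) (hsum : a.sum = n) :
    tildeComp n a = a ++ a.reverse := by
  have ha' : IsComposition a.reverse := fun x hx => ha x (List.mem_reverse.mp hx)
  simp [tildeComp, List.filter_append, ha.filter_ne_zero, ha'.filter_ne_zero, hsum]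

lemma tildeComp_of_sum_lt {n : ℕ} {a : List ℕ} (ha : IsComposition a) (hsum : a.sum < n) :
    tildeComp n a = a ++ 2 * (n - a.sum) :: a.reverse := by
  have ha' : IsComposition a.reverse := fun x hx => ha x (List.mem_reverse.mp hx)
  have hmid : IsComposition [2 * (n - a.sum)] := by simp [IsComposition, hsum]
  rw [tildeComp, List.filter_append, List.filter_append, ha.filter_ne_zero, hmid.filter_ne_zero,
    ha'.filter_ne_zero, List.append_assoc, List.singleton_append]

lemma tildeComp_replicate_two (k : ℕ) :
    tildeComp (2 * k) (List.replicate k 2) = List.replicate (2 * k) 2 := by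
  rw [tildeComp_of_sum_eq (isComposition_replicate_two k) (by simp [mul_comm]),
    List.reverse_replicate, ← List.replicate_add, two_mul]

lemma tildeComp_one_cons_replicate_two {k : ℕ} (hk : 1 ≤ k) :
    tildeComp (2 * k) (1 :: List.replicate (k - 1) 2) =
      1 :: (List.replicate (2 * k - 1) 2 ++ [1]) := by
  have hcomp : IsComposition (1 :: List.replicate (k - 1) 2) := by
    simp [IsComposition, List.mem_replicate]
  have hsum : (1 :: List.replicate (k - 1) 2).sum = 2 * k - 1 := by
    simp only [List.sum_cons, List.sum_replicate, smul_eq_mul]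
    omega
  rw [tildeComp_of_sum_lt hcomp (by omega), hsum, List.reverse_cons, List.reverse_replicate,
    show 2 * (2 * k - (2 * k - 1)) = 2 by omega,
    show 2 * k - 1 = (k - 1) + 1 + (k - 1) by omega, List.replicate_add, List.replicate_add]
  simp

lemma meanderC_eq_pathGraph {k : ℕ} (hk : 1 ≤ k) :
    meanderC (2 * k) (List.replicate k 2) (1 :: List.replicate (k - 1) 2) =
      pathGraph (2 * (2 * k)) := by
  ext i j
  have hi := i.isLt
  have hj := j.isLt
  change _ ∧ _ ↔ _
  simp only [tildeComp_replicate_two, tildeComp_one_cons_replicate_two hk, arcs_one_cons,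
    arcs_append, arcs_replicate_two, not_arcs_nil, or_false, pathGraph_adj,
    ne_eq, Fin.ext_iff]
  constructor
  · rintro ⟨-, ⟨t, -, h₁, h₂⟩ | ⟨t, -, h₁, h₂⟩ | ⟨t, -, h₁, h₂⟩ | ⟨t, -, h₁, h₂⟩⟩ <;> omega
  · rintro (h | h) <;> refine ⟨by omega, ?_⟩
    · obtain ⟨t, ht⟩ | ⟨t, ht⟩ := Nat.even_or_odd i.val
      · exact Or.inl ⟨t, by omega, by omega, by omega⟩
      · exact Or.inr (Or.inr (Or.inl ⟨t, by omega, by omega, by omega⟩))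
    · obtain ⟨t, ht⟩ | ⟨t, ht⟩ := Nat.even_or_odd j.val
      · exact Or.inr (Or.inl ⟨t, by omega, by omega, by omega⟩)
      · exact Or.inr (Or.inr (Or.inr ⟨t, by omega, by omega, by omega⟩))

lemma connected_pathGraph_of_pos {m : ℕ} (hm : 0 < m) : (pathGraph m).Connected := by
  obtain ⟨m, rfl⟩ := Nat.exists_eq_succ_of_ne_zero hm.ne'
  exact pathGraph_connected m

lemma ncard_neighborSet_zero_pathGraph {m : ℕ} (hm : 2 ≤ m) :
    ((pathGraph m).neighborSet ⟨0, by omega⟩).ncard = 1 := by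
  rw [Set.ncard_eq_one]
  refine ⟨⟨1, hm⟩, Set.ext fun v => ?_⟩
  simp only [mem_neighborSet, pathGraph_adj, Set.mem_singleton_iff, Fin.ext_iff]
  omega

lemma numCycles_eq_zero_of_connected {V : Type*} {G : SimpleGraph V} (hG : G.Connected) {v : V}
    (hv : (G.neighborSet v).ncard ≠ 2) : numCycles G = 0 := by
  have hempty : {c | IsCycleComp G c} = ∅ := Set.eq_empty_of_forall_notMem fun c hc =>
    hv (hc v (hG.preconnected.subsingleton_connectedComponent.elim _ _))
  rw [numCycles, hempty, Set.ncard_empty]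

lemma sigmaStable_of_connected {n : ℕ} {G : SimpleGraph (Fin (2 * n))} (hG : G.Connected)
    (c : G.ConnectedComponent) : SigmaStable n G c := by
  rintro v rfl
  exact ConnectedComponent.sound (hG.preconnected _ _)

lemma numNonStableSegments_eq_zero_of_connected {n : ℕ} {a b : List ℕ}
    (hG : (meanderC n a b).Connected) : numNonStableSegments n a b = 0 := by
  have hempty : {c | IsSegmentComp (meanderC n a b) c ∧ ¬ SigmaStable n (meanderC n a b) c} = ∅ :=
    Set.eq_empty_of_forall_notMem fun c hc => hc.2 (sigmaStable_of_connected hG c)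
  rw [numNonStableSegments, hempty, Set.ncard_empty]

lemma topIndex_eq_zero_of_connected {n : ℕ} {a b : List ℕ} (hG : (meanderC n a b).Connected)
    {v : Fin (2 * n)} (hv : ((meanderC n a b).neighborSet v).ncard ≠ 2) : topIndex n a b = 0 := by
  simp [topIndex, numCycles_eq_zero_of_connected hG hv,
    numNonStableSegments_eq_zero_of_connected hG]

/-- For `n = 2k`, the datum `a = (2^k)`, `b = (1, 2^{k-1})` is Frobenius with one
central arc: its type-C meander graph is a single `σ`-stable segment, no cycles. -/
theorem explicit_frobenius_one_central_arc (k n : ℕ) (a b : List ℕ)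
    (hk : 1 ≤ k) (hn : n = 2 * k)
    (ha : a = List.replicate k 2) (hb : b = 1 :: List.replicate (k - 1) 2) :
    topIndex n a b = 0 ∧ (meanderC n a b).Connected ∧
    numCycles (meanderC n a b) = 0 ∧
    ∀ c : (meanderC n a b).ConnectedComponent, SigmaStable n (meanderC n a b) c := by
  subst hn ha hb
  have hpath := meanderC_eq_pathGraph hk
  have hconn : (meanderC (2 * k) (List.replicate k 2) (1 :: List.replicate (k - 1) 2)).Connected :=
    hpath ▸ connected_pathGraph_of_pos (by omega)
  have hend : ((meanderC (2 * k) (List.replicate k 2) (1 :: List.replicate (k - 1) 2)).neighborSet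
      ⟨0, by omega⟩).ncard ≠ 2 := by
    rw [hpath, ncard_neighborSet_zero_pathGraph (by omega)]
    omega
  exact ⟨topIndex_eq_zero_of_connected hconn hend, hconn,
    numCycles_eq_zero_of_connected hconn hend, sigmaStable_of_connected hconn⟩
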